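/- arXiv:2506.00632 — 5 statements merged into one kernel-verified Lean document; each statement's English description precedes it below -/
import Mathlib

section
/- Let R be a ring with an injective endomorphism σ such that R is σ-rigid. Then R is σ-compatible: for all a, b in R, ab = 0 if and only if aσ(b) = 0. -/
/-- A σ-rigid ring is σ-compatible. -/
theorem sigma_rigid_is_sigma_compatible {R : Type*} [Ring R] (σ : R →+* R)
    (hinj : Function.Injective σ)
    (hrigid : ∀ r : R, r * σ r = 0 → r = 0) :
    ∀ a b : R, a * b = 0 ↔ a * σ b = 0 := by
  -- reduced: a² = 0 → a = 0
  have hred : ∀ a : R, a * a = 0 → a = 0 := by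
    intro a ha
    apply hrigid
    apply hrigid
    have : σ a * σ a = 0 := by rw [← map_mul, ha, map_zero]
    calc (a * σ a) * σ (a * σ a) = a * ((σ a * σ a) * σ (σ a)) := by
          rw [map_mul]; noncomm_ring
      _ = 0 := by rw [this, zero_mul, mul_zero]
  -- ab = 0 → ba = 0
  have hcomm : ∀ a b : R, a * b = 0 → b * a = 0 := by
    intro a b h
    apply hred
    calc (b * a) * (b * a) = b * (a * b) * a := by noncomm_ring
      _ = 0 := by rw [h, mul_zero, zero_mul]
  intro a b
  constructor
  · intro h
    have hba : b * a = 0 := hcomm a b h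
    have key : b * σ a = 0 := by
      apply hrigid
      have : σ b * σ a = 0 := by rw [← map_mul, hba, map_zero]
      calc (b * σ a) * σ (b * σ a) = b * ((σ a * σ b) * σ (σ a)) := by
            rw [map_mul]; noncomm_ring
        _ = 0 := by
            have : σ a * σ b = 0 := by rw [← map_mul, h, map_zero]
            rw [this, zero_mul, mul_zero]
    -- now swap roles: with ba = 0, same argument gives a * σ b = 0
    apply hrigid
    have hσ : σ b * σ a = 0 := by rw [← map_mul, hba, map_zero]
    calc (a * σ b) * σ (a * σ b) = a * ((σ b * σ a) * σ (σ b)) := by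
          rw [map_mul]; noncomm_ring
      _ = 0 := by rw [hσ, zero_mul, mul_zero]
  · intro h
    have hba : b * a = 0 := by
      apply hrigid
      calc (b * a) * σ (b * a) = b * (a * σ b) * σ a := by rw [map_mul]; noncomm_ring
        _ = 0 := by rw [h, mul_zero, zero_mul]
    exact hcomm b a hba
end

section
/- Let R be a σ-compatible and δ-compatible ring, where σ is an endomorphism and δ a σ-derivation of R. If ab = 0 for a, b in R, then σ(a)δ(b) = 0 and δ(a)σ(b) = 0. -/
/-- In a (σ,δ)-compatible ring, ab = 0 implies σ(a)δ(b) = 0 and δ(a)σ(b) = 0. -/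
theorem sigma_delta_compatible_mul_zero {R : Type*} [Ring R] (σ : R →+* R) (δ : R →+ R)
    (hderiv : ∀ x y : R, δ (x * y) = σ x * δ y + δ x * y)
    (hσ : ∀ a b : R, a * b = 0 ↔ a * σ b = 0)
    (hδ : ∀ a b : R, a * b = 0 → a * δ b = 0) :
    ∀ a b : R, a * b = 0 → σ a * δ b = 0 ∧ δ a * σ b = 0 := by
  intro a b hab
  -- σ(a)σ(b) = σ(ab) = 0
  have h1 : σ a * σ b = 0 := by rw [← map_mul, hab, map_zero]
  -- so σ(a) b = 0 by the iff
  have h2 : σ a * b = 0 := (hσ (σ a) b).mpr h1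
  -- hence σ(a) δ(b) = 0
  have h3 : σ a * δ b = 0 := hδ _ _ h2
  -- δ(ab) = 0 gives δ(a) b = 0
  have h4 : σ a * δ b + δ a * b = 0 := by rw [← hderiv, hab, map_zero]
  have h5 : δ a * b = 0 := by rwa [h3, zero_add] at h4
  exact ⟨h3, (hσ (δ a) b).mp h5⟩
end

section
/- The zero-divisor graph of any ring R is connected with diameter at most 3: for any two distinct nonzero zero-divisors a and b of R, there is a path of length at most 3 between them in the graph where distinct vertices x, y are adjacent iff xy = 0 or yx = 0. -/
lemma zdg_aux {R : Type*} [Ring R] {a b x y : R}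
    (hx0 : x ≠ 0) (hy0 : y ≠ 0) (hax : a * x = 0)
    (hy' : b * y = 0 ∨ y * b = 0) (hab : a * b ≠ 0) (hba : b * a ≠ 0) :
    (∃ c, c ≠ 0 ∧ a ≠ c ∧ c ≠ b ∧ (a * c = 0 ∨ c * a = 0) ∧ (c * b = 0 ∨ b * c = 0)) ∨
    (∃ c d, c ≠ 0 ∧ d ≠ 0 ∧ a ≠ c ∧ c ≠ d ∧ d ≠ b ∧
      (a * c = 0 ∨ c * a = 0) ∧ (c * d = 0 ∨ d * c = 0) ∧ (d * b = 0 ∨ b * d = 0)) := by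
  rcases hy' with hby | hyb
  · -- Case A : b * y = 0
    by_cases h1 : a * y = 0 ∨ y * a = 0
    · left
      refine ⟨y, hy0, ?_, ?_, h1, Or.inr hby⟩
      · rintro rfl; exact hba hby
      · rintro rfl
        rcases h1 with h | h
        · exact hab h
        · exact hba h
    · push_neg at h1
      obtain ⟨hay, hya⟩ := h1
      by_cases h2 : x * b = 0 ∨ b * x = 0
      · left
        refine ⟨x, hx0, ?_, ?_, Or.inl hax, h2⟩
        · rintro rfl
          rcases h2 with h | h
          · exact hab h
          · exact hba h
        · rintro rfl; exact hab hax
      · push_neg at h2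
        obtain ⟨hxb, hbx⟩ := h2
        by_cases h3 : y = b
        · rw [h3] at hby
          -- hby : b * b = 0
          by_cases h4 : x = a
          · rw [h4] at hax
            -- hax : a * a = 0
            left
            refine ⟨a * b, hab, ?_, ?_, Or.inl (by rw [← mul_assoc, hax, zero_mul]),
              Or.inl (by rw [mul_assoc, hby, mul_zero])⟩
            · intro h
              have h5 : (a * b) * b = a * b := by rw [← h]; exact h.symm
              apply hab
              rw [← h5, mul_assoc, hby, mul_zero]
            · intro h
              have h5 : a * (a * b) = a * b := by rw [h]; exact h
              apply hab
              rw [← h5, ← mul_assoc, hax, zero_mul]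
          · right
            refine ⟨x, b * a, hx0, hba, Ne.symm h4, ?_, ?_,
              Or.inl hax, Or.inr (by rw [mul_assoc, hax, mul_zero]),
              Or.inr (by rw [← mul_assoc, hby, zero_mul])⟩
            · intro h
              apply hbx
              rw [h, ← mul_assoc, hby, zero_mul]
            · intro h
              apply hbx
              rw [← h, mul_assoc, hax, mul_zero]
        · right
          refine ⟨x * b, y, hxb, hy0, ?_, ?_, h3,
            Or.inl (by rw [← mul_assoc, hax, zero_mul]),
            Or.inl (by rw [mul_assoc, hby, mul_zero]),
            Or.inr hby⟩
          · intro h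
            apply hay
            rw [h, mul_assoc, hby, mul_zero]
          · intro h
            apply hay
            rw [← h, ← mul_assoc, hax, zero_mul]
  · -- Case B : y * b = 0
    by_cases h1 : x * b = 0 ∨ b * x = 0
    · left
      refine ⟨x, hx0, ?_, ?_, Or.inl hax, h1⟩
      · rintro rfl
        rcases h1 with h | h
        · exact hab h
        · exact hba h
      · rintro rfl; exact hab hax
    · push_neg at h1
      obtain ⟨hxb, hbx⟩ := h1
      by_cases h2 : a * y = 0 ∨ y * a = 0
      · left
        refine ⟨y, hy0, ?_, ?_, h2, Or.inl hyb⟩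
        · rintro rfl; exact hab hyb
        · rintro rfl
          rcases h2 with h | h
          · exact hab h
          · exact hba h
      · push_neg at h2
        obtain ⟨hay, hya⟩ := h2
        by_cases h3 : x * y = 0
        · right
          refine ⟨x, y, hx0, hy0, ?_, ?_, ?_, Or.inl hax, Or.inl h3, Or.inl hyb⟩
          · rintro rfl; exact hay h3
          · rintro rfl; exact hay hax
          · rintro rfl; exact hxb h3
        · left
          refine ⟨x * y, h3, ?_, ?_,
            Or.inl (by rw [← mul_assoc, hax, zero_mul]),
            Or.inl (by rw [mul_assoc, hyb, mul_zero])⟩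
          · intro h
            apply hab
            rw [h, mul_assoc, hyb, mul_zero]
          · intro h
            apply hab
            rw [← h, ← mul_assoc, hax, zero_mul]

lemma zdg_aux' {R : Type*} [Ring R] {a b x y : R}
    (hx0 : x ≠ 0) (hy0 : y ≠ 0) (hxa : x * a = 0)
    (hy' : y * b = 0 ∨ b * y = 0) (hab : a * b ≠ 0) (hba : b * a ≠ 0) :
    (∃ c, c ≠ 0 ∧ a ≠ c ∧ c ≠ b ∧ (a * c = 0 ∨ c * a = 0) ∧ (c * b = 0 ∨ b * c = 0)) ∨
    (∃ c d, c ≠ 0 ∧ d ≠ 0 ∧ a ≠ c ∧ c ≠ d ∧ d ≠ b ∧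
      (a * c = 0 ∨ c * a = 0) ∧ (c * d = 0 ∨ d * c = 0) ∧ (d * b = 0 ∨ b * d = 0)) := by
  have hx0' : MulOpposite.op x ≠ 0 := by simpa using hx0
  have hy0' : MulOpposite.op y ≠ 0 := by simpa using hy0
  have hax' : MulOpposite.op a * MulOpposite.op x = 0 := by
    rw [← MulOpposite.op_mul, hxa, MulOpposite.op_zero]
  have hy'' : MulOpposite.op b * MulOpposite.op y = 0 ∨
      MulOpposite.op y * MulOpposite.op b = 0 := by
    rcases hy' with h | h
    · left; rw [← MulOpposite.op_mul, h, MulOpposite.op_zero]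
    · right; rw [← MulOpposite.op_mul, h, MulOpposite.op_zero]
  have hab' : MulOpposite.op a * MulOpposite.op b ≠ 0 := by
    exact fun h => hba (by simpa using congrArg MulOpposite.unop h)
  have hba' : MulOpposite.op b * MulOpposite.op a ≠ 0 := by
    exact fun h => hab (by simpa using congrArg MulOpposite.unop h)
  have H := zdg_aux hx0' hy0' hax' hy'' hab' hba'
  rcases H with ⟨c, hc0, hac, hcb, h1, h2⟩ | ⟨c, d, hc0, hd0, hac, hcd, hdb, h1, h2, h3⟩
  · left
    refine ⟨c.unop, by simpa using hc0, ?_, ?_, ?_, ?_⟩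
    · intro h; exact hac (by rw [h, MulOpposite.op_unop])
    · intro h; exact hcb (by rw [← h, MulOpposite.op_unop])
    · rcases h1 with h | h
      · right; have := congrArg MulOpposite.unop h; simpa using this
      · left; have := congrArg MulOpposite.unop h; simpa using this
    · rcases h2 with h | h
      · right; have := congrArg MulOpposite.unop h; simpa using this
      · left; have := congrArg MulOpposite.unop h; simpa using this
  · right
    refine ⟨c.unop, d.unop, by simpa using hc0, by simpa using hd0, ?_, ?_, ?_, ?_, ?_, ?_⟩
    · intro h; exact hac (by rw [h, MulOpposite.op_unop])
    · intro h; exact hcd (MulOpposite.unop_injective h)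
    · intro h; exact hdb (by rw [← h, MulOpposite.op_unop])
    · rcases h1 with h | h
      · right; have := congrArg MulOpposite.unop h; simpa using this
      · left; have := congrArg MulOpposite.unop h; simpa using this
    · rcases h2 with h | h
      · right; have := congrArg MulOpposite.unop h; simpa using this
      · left; have := congrArg MulOpposite.unop h; simpa using this
    · rcases h3 with h | h
      · right; have := congrArg MulOpposite.unop h; simpa using this
      · left; have := congrArg MulOpposite.unop h; simpa using this


/-- The zero-divisor graph of any ring is connected with diameter at most 3. -/
theorem zero_divisor_graph_diam_le_three {R : Type*} [Ring R]
    (V : R → Prop) (Adj : R → R → Prop)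
    (hV : ∀ x, V x ↔ x ≠ 0 ∧ ∃ y : R, y ≠ 0 ∧ (x * y = 0 ∨ y * x = 0))
    (hAdj : ∀ x y, Adj x y ↔ x ≠ y ∧ (x * y = 0 ∨ y * x = 0)) :
    ∀ a b : R, V a → V b → a ≠ b →
      Adj a b ∨ (∃ c, V c ∧ Adj a c ∧ Adj c b) ∨
        (∃ c d, V c ∧ V d ∧ Adj a c ∧ Adj c d ∧ Adj d b) := by
  intro a b hVa hVb hne
  obtain ⟨ha0, x, hx0, hx⟩ := (hV a).1 hVa
  obtain ⟨hb0, y, hy0, hy⟩ := (hV b).1 hVb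
  by_cases hadj : a * b = 0 ∨ b * a = 0
  · exact Or.inl ((hAdj a b).2 ⟨hne, hadj⟩)
  · push_neg at hadj
    obtain ⟨hab, hba⟩ := hadj
    have key : (∃ c, c ≠ 0 ∧ a ≠ c ∧ c ≠ b ∧ (a * c = 0 ∨ c * a = 0) ∧
          (c * b = 0 ∨ b * c = 0)) ∨
        (∃ c d, c ≠ 0 ∧ d ≠ 0 ∧ a ≠ c ∧ c ≠ d ∧ d ≠ b ∧
          (a * c = 0 ∨ c * a = 0) ∧ (c * d = 0 ∨ d * c = 0) ∧
          (d * b = 0 ∨ b * d = 0)) := by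
      rcases hx with hax | hxa
      · exact zdg_aux hx0 hy0 hax hy hab hba
      · rcases hy with hby | hyb
        · -- apply zdg_aux with roles of a and b swapped, then reverse the path
          have H := zdg_aux hy0 hx0 hby (Or.inr hxa) hba hab
          rcases H with ⟨c, hc0, hbc, hca, h1, h2⟩ |
            ⟨c, d, hc0, hd0, hbc, hcd, hda, h1, h2, h3⟩
          · exact Or.inl ⟨c, hc0, Ne.symm hca, Ne.symm hbc, Or.symm h2, Or.symm h1⟩
          · exact Or.inr ⟨d, c, hd0, hc0, Ne.symm hda, Ne.symm hcd, Ne.symm hbc,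
              Or.symm h3, Or.symm h2, Or.symm h1⟩
        · exact zdg_aux' hx0 hy0 hxa (Or.inl hyb) hab hba
    rcases key with ⟨c, hc0, hac, hcb, h1, h2⟩ |
      ⟨c, d, hc0, hd0, hac, hcd, hdb, h1, h2, h3⟩
    · refine Or.inr (Or.inl ⟨c, ?_, ?_, ?_⟩)
      · exact (hV c).2 ⟨hc0, a, ha0, Or.symm h1⟩
      · exact (hAdj a c).2 ⟨hac, h1⟩
      · exact (hAdj c b).2 ⟨hcb, h2⟩
    · refine Or.inr (Or.inr ⟨c, d, ?_, ?_, ?_, ?_, ?_⟩)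
      · exact (hV c).2 ⟨hc0, a, ha0, Or.symm h1⟩
      · exact (hV d).2 ⟨hd0, b, hb0, h3⟩
      · exact (hAdj a c).2 ⟨hac, h1⟩
      · exact (hAdj c d).2 ⟨hcd, h2⟩
      · exact (hAdj d b).2 ⟨hdb, h3⟩
end

section
/- If the zero-divisor graph of a commutative ring R contains a cycle, then its girth is at most 4. -/
open SimpleGraph Walk

private lemma getVert_eq_support_getElem {V : Type*} {G : SimpleGraph V} {u v : V}
    (w : G.Walk u v) (i : ℕ) (hi : i ≤ w.length) :
    w.getVert i = w.support[i]'(by rw [SimpleGraph.Walk.length_support]; omega) := by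
  induction w generalizing i with
  | nil =>
    simp only [Walk.length_nil, Nat.le_zero] at hi
    subst hi
    simp [SimpleGraph.Walk.getVert]
  | cons h p ih =>
    cases i with
    | zero => simp
    | succ n =>
      simp only [Walk.getVert_cons_succ, Walk.support_cons, List.getElem_cons_succ]
      exact ih n (by simpa using hi)

private lemma cycle_getVert_inj {V : Type*} {G : SimpleGraph V} {u : V}
    {w : G.Walk u u} (hw : w.IsCycle) {i j : ℕ} (hi1 : 1 ≤ i) (hi2 : i ≤ w.length)
    (hj1 : 1 ≤ j) (hj2 : j ≤ w.length) (hij : i ≠ j) : w.getVert i ≠ w.getVert j := by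
  have hn := hw.support_nodup
  rw [getVert_eq_support_getElem w i hi2, getVert_eq_support_getElem w j hj2]
  obtain ⟨i, rfl⟩ : ∃ i', i = i' + 1 := ⟨i - 1, by omega⟩
  obtain ⟨j, rfl⟩ : ∃ j', j = j' + 1 := ⟨j - 1, by omega⟩
  have hlt : ∀ k : ℕ, k + 1 ≤ w.length → k < w.support.tail.length := by
    intro k hk
    simp [SimpleGraph.Walk.length_support]
    omega
  rw [← List.getElem_tail (h := hlt i (by omega)), ← List.getElem_tail (h := hlt j (by omega))]
  intro h
  exact hij (by rw [hn.getElem_inj_iff.mp h])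

private lemma egirth_le_three' {V : Type*} {G : SimpleGraph V} {a b c : V}
    (hab : G.Adj a b) (hbc : G.Adj b c) (hca : G.Adj c a) : G.egirth ≤ 3 := by
  have h1 : a ≠ b := hab.ne
  have h2 : b ≠ c := hbc.ne
  have h3 : c ≠ a := hca.ne
  have hcyc : (Walk.cons hab (Walk.cons hbc hca.toWalk)).IsCycle := by
    simp_all [Walk.isCycle_def, Walk.isTrail_def, Sym2.eq, Sym2.rel_iff', ne_comm]
  calc G.egirth ≤ ((Walk.cons hab (Walk.cons hbc hca.toWalk)).length : ℕ∞) := by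
        rw [SimpleGraph.egirth]
        exact iInf_le_of_le a (iInf_le_of_le _ (iInf_le_of_le hcyc le_rfl))
    _ ≤ 3 := by simp

private lemma egirth_le_four' {V : Type*} {G : SimpleGraph V} {a b c d : V}
    (hab : G.Adj a b) (hbc : G.Adj b c) (hcd : G.Adj c d) (hda : G.Adj d a)
    (hac : a ≠ c) (hbd : b ≠ d) : G.egirth ≤ 4 := by
  have h1 : a ≠ b := hab.ne
  have h2 : b ≠ c := hbc.ne
  have h3 : c ≠ d := hcd.ne
  have h4 : d ≠ a := hda.ne
  have hcyc : (Walk.cons hab (Walk.cons hbc (Walk.cons hcd hda.toWalk))).IsCycle := by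
    simp_all [Walk.isCycle_def, Walk.isTrail_def, Sym2.eq, Sym2.rel_iff', ne_comm]
  calc G.egirth ≤ ((Walk.cons hab (Walk.cons hbc (Walk.cons hcd hda.toWalk))).length : ℕ∞) := by
        rw [SimpleGraph.egirth]
        exact iInf_le_of_le a (iInf_le_of_le _ (iInf_le_of_le hcyc le_rfl))
    _ ≤ 4 := by simp

/-- If the zero-divisor graph of a commutative ring contains a cycle,
its girth is at most 4. -/
theorem zero_divisor_graph_girth_le_four {R : Type*} [CommRing R]
    (G : SimpleGraph R)
    (hG : ∀ x y : R, G.Adj x y ↔ x ≠ y ∧ x ≠ 0 ∧ y ≠ 0 ∧ x * y = 0) :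
    G.egirth ≠ ⊤ → G.egirth ≤ 4 := by
  intro hne
  by_contra hlt
  push_neg at hlt
  refine absurd ?_ (not_le.mpr hlt)
  rw [Ne, SimpleGraph.egirth_eq_top] at hne
  obtain ⟨u, w, hw, hlen⟩ := SimpleGraph.exists_egirth_eq_length.mpr hne
  have hn5 : 5 ≤ w.length := by
    rw [hlen] at hlt
    exact_mod_cast hlt
  have ha_eq : u = w.getVert w.length := (w.getVert_length).symm
  -- extract the five vertices with their properties, then forget the walk
  obtain ⟨a, b, c, d, e, hab, hbc, hcd, hea, hac, had, hae, hbd, hbe, hce⟩ :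
      ∃ a b c d e : R, G.Adj a b ∧ G.Adj b c ∧ G.Adj c d ∧ G.Adj e a ∧
        a ≠ c ∧ a ≠ d ∧ a ≠ e ∧ b ≠ d ∧ b ≠ e ∧ c ≠ e := by
    refine ⟨u, w.getVert 1, w.getVert 2, w.getVert 3, w.getVert (w.length - 1),
      ?_, w.adj_getVert_succ (by omega), w.adj_getVert_succ (by omega), ?_, ?_, ?_, ?_, ?_, ?_, ?_⟩
    · have := w.adj_getVert_succ (i := 0) (by omega)
      simpa using this
    · have := w.adj_getVert_succ (i := w.length - 1) (by omega)
      rw [show w.length - 1 + 1 = w.length by omega, ← ha_eq] at this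
      exact this
    · exact ha_eq.trans_ne (cycle_getVert_inj hw (by omega) (by omega) (by omega) (by omega) (by omega))
    · exact ha_eq.trans_ne (cycle_getVert_inj hw (by omega) (by omega) (by omega) (by omega) (by omega))
    · exact ha_eq.trans_ne (cycle_getVert_inj hw (by omega) (by omega) (by omega) (by omega) (by omega))
    · exact cycle_getVert_inj hw (by omega) (by omega) (by omega) (by omega) (by omega)
    · exact cycle_getVert_inj hw (by omega) (by omega) (by omega) (by omega) (by omega)
    · exact cycle_getVert_inj hw (by omega) (by omega) (by omega) (by omega) (by omega)
  clear hlen ha_eq hn5 hw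
  -- algebraic data
  obtain ⟨hab', ha0, hb0, pab⟩ := (hG a b).mp hab
  obtain ⟨hbc', _, hc0, pbc⟩ := (hG b c).mp hbc
  obtain ⟨hcd', _, hd0, pcd⟩ := (hG c d).mp hcd
  obtain ⟨hea', he0, _, pea⟩ := (hG e a).mp hea
  have htb : (a * c) * b = 0 := by linear_combination c * pab
  have htd : (a * c) * d = 0 := by linear_combination a * pcd
  have hte : (a * c) * e = 0 := by linear_combination c * pea
  by_cases h0 : a * c = 0
  · -- triangle a b c
    refine le_trans (egirth_le_three' hab hbc ?_) (by norm_num)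
    exact (hG c a).mpr ⟨fun h => hac h.symm, hc0, ha0, by linear_combination h0⟩
  by_cases h2 : a * c = b
  · -- b * d = 0 : triangle b c d
    refine le_trans (egirth_le_three' hbc hcd ?_) (by norm_num)
    refine (hG d b).mpr ⟨fun h => hbd h.symm, hd0, hb0, ?_⟩
    have hbd0 : b * d = 0 := by rw [← h2]; exact htd
    linear_combination hbd0
  by_cases h4 : a * c = d
  · -- b * d = 0 : triangle b c d
    refine le_trans (egirth_le_three' hbc hcd ?_) (by norm_num)
    refine (hG d b).mpr ⟨fun h => hbd h.symm, hd0, hb0, ?_⟩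
    rw [← h4]; exact htb
  by_cases h5 : a * c = e
  · -- e * b = 0 : triangle e a b
    refine le_trans (egirth_le_three' hea hab ?_) (by norm_num)
    refine (hG b e).mpr ⟨hbe, hb0, he0, ?_⟩
    have : e * b = 0 := by rw [← h5]; exact htb
    linear_combination this
  by_cases h1 : a * c = a
  · -- a * d = 0 : 4-cycle a b c d
    refine egirth_le_four' hab hbc hcd ?_ hac hbd
    refine (hG d a).mpr ⟨fun h => had h.symm, hd0, ha0, ?_⟩
    have : a * d = 0 := by rw [← h1]; exact htd
    linear_combination this
  by_cases h3 : a * c = c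
  · -- c * e = 0 : 4-cycle e a b c
    refine egirth_le_four' hea hab hbc ?_ (fun h => hbe h.symm) hac
    refine (hG c e).mpr ⟨hce, hc0, he0, ?_⟩
    rw [← h3]; exact hte
  · -- 4-cycle a b (a*c) e
    have hbt : G.Adj b (a * c) :=
      (hG b (a * c)).mpr ⟨fun h => h2 h.symm, hb0, h0, by linear_combination htb⟩
    have hte' : G.Adj (a * c) e := (hG (a * c) e).mpr ⟨h5, h0, he0, hte⟩
    exact egirth_le_four' hab hbt hte' hea (fun h => h1 h.symm) hbe
end

section
/- Let R be a commutative reduced ring with nonempty set of nonzero zero-divisors. Then the zero-divisor graph of the polynomial ring R[x] contains a cycle of length 4, so its girth is at most 4. -/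
open Polynomial

/-- If R is a commutative reduced ring with a nonzero zero-divisor, then the
zero-divisor graph of R[x] contains a cycle of length 4. -/
theorem zero_divisor_graph_polynomial_girth_le_four {R : Type*} [CommRing R]
    [IsReduced R] (hzd : ∃ a b : R, a ≠ 0 ∧ b ≠ 0 ∧ a * b = 0) :
    ∃ f g h k : R[X], f ≠ 0 ∧ g ≠ 0 ∧ h ≠ 0 ∧ k ≠ 0 ∧
      f ≠ g ∧ f ≠ h ∧ f ≠ k ∧ g ≠ h ∧ g ≠ k ∧ h ≠ k ∧
      f * g = 0 ∧ g * h = 0 ∧ h * k = 0 ∧ k * f = 0 := by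
  obtain ⟨a, b, ha, hb, hab⟩ := hzd
  have hba : b * a = 0 := by rw [mul_comm]; exact hab
  have hne : a ≠ b := by
    rintro rfl
    exact ha (IsReduced.eq_zero a ⟨2, by rw [sq]; exact hab⟩)
  refine ⟨C a, C b * X, C a * X, C b, ?_, ?_, ?_, ?_, ?_, ?_, ?_, ?_, ?_, ?_, ?_, ?_, ?_, ?_⟩
  · simpa using ha
  · simp [ha, hb, X_ne_zero]
  · simp [ha, X_ne_zero]
  · simpa using hb
  · intro h; apply ha; simpa using congrArg (fun p => Polynomial.coeff p 0) h
  · intro h; apply ha; simpa using congrArg (fun p => Polynomial.coeff p 0) h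
  · intro h; apply hne; simpa using congrArg (fun p => Polynomial.coeff p 0) h
  · intro h; apply hne; have := congrArg (fun p => Polynomial.coeff p 1) h
    simpa using this.symm
  · intro h; apply hb; simpa using (congrArg (fun p => Polynomial.coeff p 0) h).symm
  · intro h; apply hb; simpa using (congrArg (fun p => Polynomial.coeff p 0) h).symm
  · rw [← mul_assoc, ← C_mul, hab]; simp
  · rw [mul_mul_mul_comm, ← C_mul, hba]; simp
  · rw [mul_comm (C a * X), ← mul_assoc, ← C_mul, hba]; simp
  · rw [← C_mul, hba]; simp
end
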